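/- Fix an integer N ≥ 2, Λ < 0, and set λ_N = √(N(N−1)(N+1)/6). Suppose real functions m̃(R), S̃(R), ω̃(R) satisfy, on an interval I ⊆ (0, ∞), the su(2) EYM field equations with cosmological constant Λ̃ = λ_N²Λ (i.e. the su(N) EYM field equations specialized to N = 2, with single gauge field function ω̃). Define m(r) = λ_N · m̃(r/λ_N), S(r) = S̃(r/λ_N), and ω_j(r) = √(j(N−j)) · ω̃(r/λ_N) for j = 1, …, N−1. Then (m, S, ω_1, …, ω_{N−1}) satisfies the su(N) EYM field equations with cosmological constant Λ at every r ∈ λ_N · I. -/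

import Mathlib

open Filter Asymptotics Topology

noncomputable section

/-- μ(r) = 1 − 2m(r)/r − Λr²/3. -/
def muF (Λ : ℝ) (m : ℝ → ℝ) (r : ℝ) : ℝ := 1 - 2 * m r / r - Λ * r ^ 2 / 3

/-- G = Σ_{j=1}^{N−1} (ω_j′)². -/
def GF (N : ℕ) (ω : ℕ → ℝ → ℝ) (r : ℝ) : ℝ :=
  ∑ j ∈ Finset.Icc 1 (N - 1), deriv (ω j) r ^ 2

/-- p_θ evaluated on a set of gauge-field values `w`. -/
def pThetaVal (N : ℕ) (w : ℕ → ℝ) (r : ℝ) : ℝ :=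
  1 / (4 * r ^ 4) *
    ∑ j ∈ Finset.Icc 1 N, (w j ^ 2 - w (j - 1) ^ 2 - (N : ℝ) - 1 + 2 * (j : ℝ)) ^ 2

/-- p_θ = (1/4r⁴) Σ_{j=1}^{N} (ω_j² − ω_{j−1}² − N − 1 + 2j)². -/
def pTheta (N : ℕ) (ω : ℕ → ℝ → ℝ) (r : ℝ) : ℝ := pThetaVal N (fun j => ω j r) r

/-- W_j evaluated on gauge-field values `w`. -/
def WVal (w : ℕ → ℝ) (j : ℕ) : ℝ :=
  1 - w j ^ 2 + 1 / 2 * (w (j - 1) ^ 2 + w (j + 1) ^ 2)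

/-- W_j = 1 − ω_j² + (1/2)(ω_{j−1}² + ω_{j+1}²). -/
def WF (ω : ℕ → ℝ → ℝ) (j : ℕ) (r : ℝ) : ℝ := WVal (fun i => ω i r) j

/-- The static spherically symmetric su(N) EYM field equations at radius `r`:
m′ = μG + r²p_θ, S′ = S·(2G/r), and the N−1 Yang–Mills equations
r²μω_j″ + (2m − 2r³p_θ − (2Λ/3)r³)ω_j′ + W_jω_j = 0, with ω₀ ≡ 0, ω_N ≡ 0. -/
def EYM (N : ℕ) (Λ : ℝ) (m S : ℝ → ℝ) (ω : ℕ → ℝ → ℝ) (r : ℝ) : Prop :=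
  ω 0 r = 0 ∧ ω N r = 0 ∧
  HasDerivAt m (muF Λ m r * GF N ω r + r ^ 2 * pTheta N ω r) r ∧
  HasDerivAt S (S r * (2 * GF N ω r / r)) r ∧
  ∀ j ∈ Finset.Icc 1 (N - 1),
    DifferentiableAt ℝ (ω j) r ∧ DifferentiableAt ℝ (deriv (ω j)) r ∧
    r ^ 2 * muF Λ m r * deriv (deriv (ω j)) r
      + (2 * m r - 2 * r ^ 3 * pTheta N ω r - 2 * Λ * r ^ 3 / 3) * deriv (ω j) r
      + WF ω j r * ω j r = 0

/-- Boundary conditions at infinity: m → M, S → 1, ω_j → ω_{j,∞} as r → ∞. -/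
def BCInfinity (N : ℕ) (m S : ℝ → ℝ) (ω : ℕ → ℝ → ℝ) : Prop :=
  (∃ M : ℝ, Tendsto m atTop (𝓝 M)) ∧ Tendsto S atTop (𝓝 1) ∧
  ∀ j ∈ Finset.Icc 1 (N - 1), ∃ w : ℝ, Tendsto (ω j) atTop (𝓝 w)

/-- `f` has exactly `k` zeros in the set `s`. -/
def HasExactlyZeros (f : ℝ → ℝ) (s : Set ℝ) (k : ℕ) : Prop :=
  {r ∈ s | f r = 0}.Finite ∧ {r ∈ s | f r = 0}.ncard = k

/-- λ_N = √(N(N−1)(N+1)/6). -/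
def lamN (N : ℕ) : ℝ := Real.sqrt ((N : ℝ) * ((N : ℝ) - 1) * ((N : ℝ) + 1) / 6)


/-!
Put `c_j = √(j(N−j))`. The squares `c_j²` sum to `λ_N²`, their first differences are
`c_j² − c_{j−1}² = N + 1 − 2j` with `Σ (N + 1 − 2j)² = 2λ_N²`, and their second differences
are `−2`. Hence for `ω_j = c_j ω̃` the quantities `G` and `p_θ` are `λ_N²` times their su(2)
values, while `W_j = 1 − ω̃²` is unchanged. The rescaling `r = λ_N R` divides `G`
by `λ_N²` and `p_θ` by `λ_N⁴`, and `Λ̃ = λ_N²Λ` makes `μ` invariant, so every su(N) equation at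
`λ_N R` becomes the su(2) equation at `R` (multiplied by `c_j` in the Yang–Mills case).
-/

open Finset

lemma sum_Icc_natCast (n : ℕ) : ∑ j ∈ Icc 1 n, (j : ℝ) = n * (n + 1) / 2 := by
  induction n with
  | zero => simp
  | succ n ih => rw [sum_Icc_succ_top (by omega), ih]; push_cast; ring

lemma sum_Icc_natCast_sq (n : ℕ) :
    ∑ j ∈ Icc 1 n, (j : ℝ) ^ 2 = n * (n + 1) * (2 * n + 1) / 6 := by
  induction n with
  | zero => simp
  | succ n ih => rw [sum_Icc_succ_top (by omega), ih]; push_cast; ring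

lemma lamN_sq (N : ℕ) : lamN N ^ 2 = N * (N - 1) * (N + 1) / 6 := by
  refine Real.sq_sqrt (div_nonneg ?_ (by norm_num))
  rcases N with _ | N
  · simp
  · push_cast; ring_nf; positivity

lemma lamN_pos {N : ℕ} (hN : 2 ≤ N) : 0 < lamN N := by
  have hN' : (2 : ℝ) ≤ N := by exact_mod_cast hN
  exact Real.sqrt_pos.2 (div_pos (mul_pos (mul_pos (by linarith) (by linarith)) (by linarith))
    (by norm_num))

lemma sum_Icc_mul_sub (N : ℕ) : ∑ j ∈ Icc 1 (N - 1), (j : ℝ) * (N - j) = lamN N ^ 2 := by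
  rcases N with _ | N
  · simp [lamN]
  have hexp (j : ℕ) : (j : ℝ) * ((N + 1 : ℕ) - j) = (N + 1) * j - j ^ 2 := by push_cast; ring
  simp_rw [Nat.add_sub_cancel, hexp, sum_sub_distrib, ← mul_sum, sum_Icc_natCast,
    sum_Icc_natCast_sq, lamN_sq]
  push_cast; ring

lemma sum_Icc_sq_add_one_sub_two_mul (N : ℕ) :
    ∑ j ∈ Icc 1 N, ((N : ℝ) + 1 - 2 * j) ^ 2 = 2 * lamN N ^ 2 := by
  have hexp (j : ℕ) : ((N : ℝ) + 1 - 2 * j) ^ 2 = (N + 1) ^ 2 - 4 * (N + 1) * j + 4 * j ^ 2 := by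
    ring
  simp_rw [hexp, sum_add_distrib, sum_sub_distrib, sum_const, ← mul_sum, sum_Icc_natCast,
    sum_Icc_natCast_sq, Nat.card_Icc, lamN_sq]
  simp only [add_tsub_cancel_right, nsmul_eq_mul]
  ring

lemma sq_sqrt_mul_sub {j N : ℕ} (h : j ≤ N) : √((j : ℝ) * (N - j)) ^ 2 = j * (N - j) :=
  Real.sq_sqrt (mul_nonneg j.cast_nonneg (sub_nonneg.2 (by exact_mod_cast h)))

lemma pThetaVal_two {w : ℕ → ℝ} (h0 : w 0 = 0) (h2 : w 2 = 0) (r : ℝ) :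
    pThetaVal 2 w r = (w 1 ^ 2 - 1) ^ 2 / (2 * r ^ 4) := by
  rw [pThetaVal, show Icc 1 2 = {1, 2} by decide, sum_pair (by norm_num)]
  simp only [Nat.reduceSub, h0, h2, Nat.cast_ofNat, Nat.cast_one]
  ring

lemma WVal_one_of_two {w : ℕ → ℝ} (h0 : w 0 = 0) (h2 : w 2 = 0) : WVal w 1 = 1 - w 1 ^ 2 := by
  simp [WVal, h0, h2]

lemma GF_two (ω : ℕ → ℝ → ℝ) (r : ℝ) : GF 2 ω r = deriv (ω 1) r ^ 2 := by
  simp [GF]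

lemma pThetaVal_embedding (N : ℕ) (x r : ℝ) :
    pThetaVal N (fun j => √((j : ℝ) * (N - j)) * x) r
      = lamN N ^ 2 * (x ^ 2 - 1) ^ 2 / (2 * r ^ 4) := by
  unfold pThetaVal
  rw [sum_congr rfl (g := fun j : ℕ => ((N : ℝ) + 1 - 2 * j) ^ 2 * (x ^ 2 - 1) ^ 2), ← sum_mul,
    sum_Icc_sq_add_one_sub_two_mul]
  · ring
  intro j hj
  obtain ⟨h1, hN⟩ := mem_Icc.1 hj
  simp only [mul_pow, sq_sqrt_mul_sub hN, sq_sqrt_mul_sub ((j.sub_le 1).trans hN)]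
  push_cast [Nat.cast_sub h1]
  ring

lemma WVal_embedding {N j : ℕ} (hj : j ∈ Icc 1 (N - 1)) (x : ℝ) :
    WVal (fun i => √((i : ℝ) * (N - i)) * x) j = 1 - x ^ 2 := by
  obtain ⟨h1, hN⟩ := mem_Icc.1 hj
  simp only [WVal, mul_pow, sq_sqrt_mul_sub (show j ≤ N by omega),
    sq_sqrt_mul_sub (show j - 1 ≤ N by omega), sq_sqrt_mul_sub (show j + 1 ≤ N by omega)]
  push_cast [Nat.cast_sub h1]
  ring

lemma deriv_const_mul_comp_div_const (a c : ℝ) (f : ℝ → ℝ) :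
    deriv (fun r => a * f (r / c)) = fun r => a / c * deriv f (r / c) := by
  funext r
  have h := deriv_comp_mul_left c⁻¹ f r
  simp only [smul_eq_mul, ← div_eq_inv_mul] at h
  rw [deriv_const_mul_field, h]
  ring

lemma HasDerivAt.comp_div_const {f : ℝ → ℝ} {f' c x : ℝ} (hc : c ≠ 0)
    (h : HasDerivAt f f' x) : HasDerivAt (fun y => f (y / c)) (f' / c) (c * x) := by
  rw [← mul_div_cancel_left₀ x hc] at h
  simpa [Function.comp_def, div_eq_mul_inv] using h.comp (c * x) ((hasDerivAt_id _).div_const c)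

lemma GF_embedding (N : ℕ) (f : ℝ → ℝ) (c r : ℝ) :
    GF N (fun j r => √((j : ℝ) * (N - j)) * f (r / c)) r
      = lamN N ^ 2 * (deriv f (r / c) / c) ^ 2 := by
  simp only [GF, deriv_const_mul_comp_div_const, div_mul_eq_mul_div, mul_div_assoc, mul_pow]
  rw [sum_congr rfl fun j hj => by rw [sq_sqrt_mul_sub (by simp only [mem_Icc] at hj; omega)],
    ← sum_mul, sum_Icc_mul_sub]

lemma muF_rescale {l : ℝ} (hl : l ≠ 0) (Λ : ℝ) (m : ℝ → ℝ) (R : ℝ) :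
    muF Λ (fun r => l * m (r / l)) (l * R) = muF (l ^ 2 * Λ) m R := by
  simp only [muF, mul_div_cancel_left₀ R hl, mul_left_comm 2 l, mul_div_mul_left _ _ hl]
  ring

theorem EYM.su2_embedding {N : ℕ} (hN : 2 ≤ N) {Λ R : ℝ} {m S : ℝ → ℝ} {ω : ℕ → ℝ → ℝ}
    (h : EYM 2 (lamN N ^ 2 * Λ) m S ω R) :
    EYM N Λ (fun r => lamN N * m (r / lamN N)) (fun r => S (r / lamN N))
      (fun j r => √((j : ℝ) * (N - j)) * ω 1 (r / lamN N)) (lamN N * R) := by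
  obtain ⟨h0, h2, hm, hS, hYM⟩ := h
  obtain ⟨hd, hd2, hYM1⟩ := hYM 1 (by simp)
  set l := lamN N
  have hl : l ≠ 0 := (lamN_pos hN).ne'
  have hlR : l * R / l = R := mul_div_cancel_left₀ R hl
  have hG : GF N (fun j r => √((j : ℝ) * (N - j)) * ω 1 (r / l)) (l * R) = GF 2 ω R := by
    rw [GF_embedding, GF_two, hlR, div_pow, mul_div_cancel₀ _ (pow_ne_zero 2 hl)]
  have hP : pTheta N (fun j r => √((j : ℝ) * (N - j)) * ω 1 (r / l)) (l * R)
      = pTheta 2 ω R / l ^ 2 := by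
    rw [pTheta, pTheta, pThetaVal_embedding, pThetaVal_two h0 h2, hlR]
    field_simp
    ring
  have hμ := muF_rescale hl Λ m R
  refine ⟨by simp, by simp, ?_, ?_, fun j hj => ?_⟩
  · refine ((hm.comp_div_const hl).const_mul l).congr_deriv ?_
    rw [hG, hP, hμ]
    field_simp
  · refine (hS.comp_div_const hl).congr_deriv ?_
    simp only [hlR, hG]
    ring
  · simp only [deriv_const_mul_comp_div_const]
    refine ⟨(hd.hasDerivAt.comp_div_const hl).differentiableAt.const_mul _,
      (hd2.hasDerivAt.comp_div_const hl).differentiableAt.const_mul _, ?_⟩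
    rw [WF, WVal_embedding hj, hP, hμ, hlR]
    rw [WF, WVal_one_of_two h0 h2] at hYM1
    calc _ = √((j : ℝ) * (N - j)) * (R ^ 2 * muF (l ^ 2 * Λ) m R * deriv (deriv (ω 1)) R
          + (2 * m R - 2 * R ^ 3 * pTheta 2 ω R - 2 * (l ^ 2 * Λ) * R ^ 3 / 3) * deriv (ω 1) R
          + (1 - ω 1 R ^ 2) * ω 1 R) := by field_simp
      _ = 0 := by rw [hYM1, mul_zero]

theorem embedded_su2_solution_general (N : ℕ) (hN : 2 ≤ N) (Λ : ℝ)
    (I : Set ℝ)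
    (mt St ωt : ℝ → ℝ)
    (hsol : ∀ R ∈ I,
      EYM 2 ((lamN N) ^ 2 * Λ) mt St (fun j => if j = 1 then ωt else fun _ => 0) R) :
    ∀ R ∈ I,
      EYM N Λ (fun r => lamN N * mt (r / lamN N)) (fun r => St (r / lamN N))
        (fun j r => Real.sqrt ((j : ℝ) * ((N : ℝ) - (j : ℝ))) * ωt (r / lamN N))
        (lamN N * R) :=
  fun R hR => (hsol R hR).su2_embedding hN

/-- **Embedded su(2) solutions.** If (m̃, S̃, ω̃) solves the su(2) EYM equations with
cosmological constant Λ̃ = λ_N²Λ on an interval I ⊆ (0,∞), then the rescaled configuration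
m(r) = λ_N m̃(r/λ_N), S(r) = S̃(r/λ_N), ω_j(r) = √(j(N−j)) ω̃(r/λ_N) solves the su(N) EYM
equations with cosmological constant Λ at every point of λ_N · I. -/
theorem embedded_su2_solution (N : ℕ) (hN : 2 ≤ N) (Λ : ℝ) (hΛ : Λ < 0)
    (I : Set ℝ) (hI : I ⊆ Set.Ioi (0 : ℝ))
    (mt St ωt : ℝ → ℝ)
    (hsol : ∀ R ∈ I,
      EYM 2 ((lamN N) ^ 2 * Λ) mt St (fun j => if j = 1 then ωt else fun _ => 0) R) :
    ∀ R ∈ I,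
      EYM N Λ (fun r => lamN N * mt (r / lamN N)) (fun r => St (r / lamN N))
        (fun j r => Real.sqrt ((j : ℝ) * ((N : ℝ) - (j : ℝ))) * ωt (r / lamN N))
        (lamN N * R) :=
  embedded_su2_solution_general N hN Λ I mt St ωt hsol
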